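/- arXiv:2412.02800 — 4 statements merged into one kernel-verified Lean document; each statement's English description precedes it below -/
import Mathlib

section
/- Let G be a finite simple graph and let (R,B) be a CNB-coloring of G. Then the number of vertices in R whose degree is congruent to 3 modulo 4 is even, the number of vertices in B whose degree is congruent to 3 modulo 4 is even, and the number of vertices of G whose degree is congruent to 1 modulo 4 is even. -/
open scoped Classical

/-- An `(R, Rᶜ)`-coloring of `G` is a neighborhood balanced coloring (NB-coloring) if each
vertex has equally many red and blue vertices in its open neighborhood. -/
def SimpleGraph.IsNBColoring {V : Type*} [Fintype V] (G : SimpleGraph V) (R : Finset V) : Prop :=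
  ∀ v : V, (G.neighborFinset v ∩ R).card = (G.neighborFinset v ∩ Rᶜ).card

/-- An `(R, Rᶜ)`-coloring of `G` is a closed neighborhood balanced coloring (CNB-coloring) if each
vertex has equally many red and blue vertices in its closed neighborhood. -/
def SimpleGraph.IsCNBColoring {V : Type*} [Fintype V] (G : SimpleGraph V) (R : Finset V) : Prop :=
  ∀ v : V, (insert v (G.neighborFinset v) ∩ R).card = (insert v (G.neighborFinset v) ∩ Rᶜ).card

/-!
In a CNB-coloring `deg v + 1 = 2 |N[v] ∩ R|`, so every degree is odd and `|N[v] ∩ R|` is even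
exactly when `deg v ≡ 3 (mod 4)`. For `v ∈ R`, `|N[v] ∩ R| - 1` is the degree of `v` in the
subgraph induced on `R`, so the red vertices of degree `≡ 3 (mod 4)` are the odd-degree vertices of
that subgraph, an even number by the handshake lemma; the same holds for the blue vertices. The
handshake lemma in `G` makes `|V|` even, and the vertices of degree `≡ 1 (mod 4)` are the rest.
-/

namespace SimpleGraph

variable {V : Type*} (G : SimpleGraph V)

/-- The subgraph induced on `S`, kept as a graph on all of `V` (vertices outside `S` become
isolated). -/
def restrictEdgesTo (S : Finset V) : SimpleGraph V :=
  G ⊓ fromRel fun u v => u ∈ S ∧ v ∈ S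

variable {G}

theorem restrictEdgesTo_adj {S : Finset V} {u v : V} :
    (G.restrictEdgesTo S).Adj u v ↔ G.Adj u v ∧ u ∈ S ∧ v ∈ S := by
  simp only [restrictEdgesTo, inf_adj, fromRel_adj]
  exact ⟨fun ⟨huv, _, hS⟩ => ⟨huv, by tauto⟩, fun ⟨huv, hS⟩ => ⟨huv, huv.ne, .inl hS⟩⟩

variable [Fintype V]

theorem neighborFinset_restrictEdgesTo_of_mem {S : Finset V} {v : V} (hv : v ∈ S) :
    (G.restrictEdgesTo S).neighborFinset v = G.neighborFinset v ∩ S := by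
  ext u
  simp [restrictEdgesTo_adj, hv]

theorem degree_restrictEdgesTo_of_notMem {S : Finset V} {v : V} (hv : v ∉ S) :
    (G.restrictEdgesTo S).degree v = 0 := by
  rw [← card_neighborFinset_eq_degree, Finset.card_eq_zero, Finset.eq_empty_iff_forall_notMem]
  intro u hu
  exact hv (restrictEdgesTo_adj.mp ((mem_neighborFinset _ _ _).mp hu)).2.1

theorem card_insert_neighborFinset_inter_of_mem {S : Finset V} {v : V} (hv : v ∈ S) :
    (insert v (G.neighborFinset v) ∩ S).card = (G.restrictEdgesTo S).degree v + 1 := by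
  rw [Finset.insert_inter_of_mem hv, Finset.card_insert_of_notMem (by simp),
    ← neighborFinset_restrictEdgesTo_of_mem hv, card_neighborFinset_eq_degree]

theorem even_card_filter_even_card_insert_neighborFinset_inter (S : Finset V) :
    Even (S.filter fun v => Even (insert v (G.neighborFinset v) ∩ S).card).card := by
  convert (G.restrictEdgesTo S).even_card_odd_degree_vertices using 2
  ext v
  by_cases hv : v ∈ S
  · simp only [Finset.mem_filter, hv, true_and, Finset.mem_univ,
      card_insert_neighborFinset_inter_of_mem hv, Nat.even_add_one, Nat.not_even_iff_odd]
  · simp [hv, degree_restrictEdgesTo_of_notMem hv]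

namespace IsCNBColoring

variable {R : Finset V}

theorem compl (h : G.IsCNBColoring R) : G.IsCNBColoring Rᶜ := fun v => by
  rw [compl_compl]
  exact (h v).symm

theorem degree_add_one_eq (h : G.IsCNBColoring R) (v : V) :
    G.degree v + 1 = 2 * (insert v (G.neighborFinset v) ∩ R).card := by
  have hsplit := Finset.card_inter_add_card_sdiff (insert v (G.neighborFinset v)) R
  rw [Finset.sdiff_eq_inter_compl, ← h v, Finset.card_insert_of_notMem (by simp),
    card_neighborFinset_eq_degree] at hsplit
  omega

theorem odd_degree (h : G.IsCNBColoring R) (v : V) : Odd (G.degree v) := by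
  have := h.degree_add_one_eq v
  rw [Nat.odd_iff]
  omega

theorem even_card_insert_neighborFinset_inter_iff (h : G.IsCNBColoring R) (v : V) :
    Even (insert v (G.neighborFinset v) ∩ R).card ↔ G.degree v % 4 = 3 := by
  have := h.degree_add_one_eq v
  rw [Nat.even_iff]
  omega

theorem degree_mod_four_eq_one_iff (h : G.IsCNBColoring R) (v : V) :
    G.degree v % 4 = 1 ↔ ¬G.degree v % 4 = 3 := by
  have := Nat.odd_iff.mp (h.odd_degree v)
  omega

theorem even_card_filter_degree_mod_four_eq_three (h : G.IsCNBColoring R) :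
    Even (R.filter fun v => G.degree v % 4 = 3).card := by
  simpa only [h.even_card_insert_neighborFinset_inter_iff] using
    G.even_card_filter_even_card_insert_neighborFinset_inter R

theorem even_card_vertices (h : G.IsCNBColoring R) : Even (Fintype.card V) := by
  simpa [h.odd_degree] using G.even_card_odd_degree_vertices

end IsCNBColoring

end SimpleGraph

/-- In any CNB-coloring of `G`, the number of red vertices of degree `≡ 3 (mod 4)` is even, the
number of blue vertices of degree `≡ 3 (mod 4)` is even, and the number of vertices of degree
`≡ 1 (mod 4)` is even. -/
theorem cnb_degree_parity_counts {V : Type*} [Fintype V] (G : SimpleGraph V) (R : Finset V)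
    (h : G.IsCNBColoring R) :
    Even (R.filter (fun v => G.degree v % 4 = 3)).card ∧
    Even (Rᶜ.filter (fun v => G.degree v % 4 = 3)).card ∧
    Even (Finset.univ.filter (fun v : V => G.degree v % 4 = 1)).card := by
  have hred := h.even_card_filter_degree_mod_four_eq_three
  have hblue := h.compl.even_card_filter_degree_mod_four_eq_three
  refine ⟨hred, hblue, ?_⟩
  have hsplit_three : (R.filter fun v => G.degree v % 4 = 3).card +
      (Rᶜ.filter fun v => G.degree v % 4 = 3).card =
      (Finset.univ.filter fun v : V => G.degree v % 4 = 3).card := by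
    rw [← Finset.card_union_of_disjoint (Finset.disjoint_filter_filter disjoint_compl_right),
      ← Finset.filter_union, Finset.union_compl]
  have hsplit_univ := Finset.card_filter_add_card_filter_not (s := Finset.univ)
    fun v : V => G.degree v % 4 = 3
  rw [← Finset.filter_congr fun v _ => h.degree_mod_four_eq_one_iff v, Finset.card_univ,
    ← hsplit_three] at hsplit_univ
  have := h.even_card_vertices
  rw [← hsplit_univ] at this
  simpa [Nat.even_add, hred, hblue] using this
end

section
/- If T is a finite tree (a connected acyclic simple graph) that admits a CNB-coloring, then the number of vertices of T is congruent to 2 modulo 4. -/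
open scoped Classical

/-!
A CNB-coloring splits every closed neighborhood `N[v]` into two halves, so every degree is odd.
Double counting the pairs `(v, u)` with `u ∈ N[v]` red gives
`S := ∑ v, #(N[v] ∩ R) = ∑ u ∈ R, #N[u]`, a sum of even numbers, while balancing gives
`2 S = ∑ v, #N[v] = 2 #E + n`. Hence `4 ∣ 2 #E + n`, which for a tree (`#E = n - 1`) reads
`4 ∣ 3 n - 2`, i.e. `n ≡ 2 (mod 4)`.
-/

namespace SimpleGraph

open Finset

variable {V : Type*} [Fintype V] (G : SimpleGraph V)

noncomputable def closedNeighborFinset (v : V) : Finset V := insert v (G.neighborFinset v)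

lemma mem_closedNeighborFinset_comm (u v : V) :
    u ∈ G.closedNeighborFinset v ↔ v ∈ G.closedNeighborFinset u := by
  simp only [closedNeighborFinset, mem_insert, mem_neighborFinset, eq_comm, adj_comm]

lemma card_closedNeighborFinset (v : V) : #(G.closedNeighborFinset v) = G.degree v + 1 := by
  rw [closedNeighborFinset, card_insert_of_notMem (by simp), card_neighborFinset_eq_degree]

lemma sum_card_closedNeighborFinset_inter (R : Finset V) :
    ∑ v, #(G.closedNeighborFinset v ∩ R) = ∑ u ∈ R, (G.degree u + 1) := by
  calc ∑ v, #(G.closedNeighborFinset v ∩ R)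
      = ∑ v, ∑ u ∈ R, if u ∈ G.closedNeighborFinset v then 1 else 0 := by
        simp_rw [inter_comm, ← filter_mem_eq_inter, card_filter]
    _ = ∑ u ∈ R, ∑ v, if v ∈ G.closedNeighborFinset u then 1 else 0 := by
        rw [sum_comm]
        simp_rw [G.mem_closedNeighborFinset_comm]
    _ = ∑ u ∈ R, (G.degree u + 1) := by
        simp_rw [← card_filter, filter_mem_eq_inter, univ_inter, card_closedNeighborFinset]

variable {G} {R : Finset V}

lemma IsCNBColoring.degree_add_one_eq_two_mul (hR : G.IsCNBColoring R) (v : V) :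
    G.degree v + 1 = 2 * #(G.closedNeighborFinset v ∩ R) := by
  rw [← card_closedNeighborFinset, ← card_inter_add_card_sdiff _ R, sdiff_eq_inter_compl,
    two_mul]
  exact congrArg _ (hR v).symm

theorem IsCNBColoring.four_dvd_two_mul_card_edgeFinset_add_card (hR : G.IsCNBColoring R) :
    4 ∣ 2 * #G.edgeFinset + Fintype.card V := by
  have hS :
      2 * #G.edgeFinset + Fintype.card V = 2 * ∑ v, #(G.closedNeighborFinset v ∩ R) := by
    rw [← sum_degrees_eq_twice_card_edges, mul_sum, ← card_univ, card_eq_sum_ones,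
      ← sum_add_distrib]
    exact sum_congr rfl fun v _ ↦ hR.degree_add_one_eq_two_mul v
  have hS_even : 2 ∣ ∑ v, #(G.closedNeighborFinset v ∩ R) := by
    rw [sum_card_closedNeighborFinset_inter]
    exact dvd_sum fun u _ ↦ ⟨_, hR.degree_add_one_eq_two_mul u⟩
  rw [hS]
  exact mul_dvd_mul_left 2 hS_even

end SimpleGraph

/-- If a finite tree admits a CNB-coloring, then its number of vertices is `≡ 2 (mod 4)`. -/
theorem cnbc_tree_card_mod_four {V : Type*} [Fintype V] (T : SimpleGraph V)
    (hT : T.IsTree) (h : ∃ R : Finset V, T.IsCNBColoring R) :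
    Fintype.card V % 4 = 2 := by
  obtain ⟨R, hR⟩ := h
  have h4 := hR.four_dvd_two_mul_card_edgeFinset_add_card
  have hE := hT.card_edgeFinset
  omega
end

section
/- Let n be an even positive integer and let d satisfy 1 ≤ d ≤ n/2 − 1 with d relatively prime to n/2. Then the cubic circulant graph C_n(d, n/2) is a CNBC graph if and only if n ≡ 0 (mod 4). -/
open scoped Classical

/-- The circulant graph `C_n(S)` on `ZMod n`: distinct vertices `i` and `j` are adjacent iff
`i - j ≡ ±d (mod n)` for some `d ∈ S`. -/
def circulant (n : ℕ) (S : Finset ℕ) : SimpleGraph (ZMod n) :=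
  SimpleGraph.fromRel (fun i j => ∃ d ∈ S, i - j = (d : ZMod n))


/-! Encode a coloring `R` by its `±1` indicator `σ`. With `m = n / 2`, `R` is a CNB-coloring of
`C_n(d, m)` iff `σ v + σ (v + d) + σ (v - d) + σ (v + m) = 0` for every `v`.

If `m` is odd, comparing this relation at `u + d` and at `u + d + m` shows that
`u ↦ σ u - σ (u + m)` is `2d`-antiperiodic; as `m • 2d = 0` with `m` odd, it vanishes, so `σ` is
`m`-periodic. Then `v ↦ σ v + σ (v + d)` is `d`-antiperiodic and `m`-periodic, and since
`m • d = d • m` it vanishes as well: `σ` is `d`-antiperiodic. The same argument applied to `σ`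
itself gives `σ = 0`, which is absurd.

If `m` is even, then `d` is odd, and the parity coloring is `d`-antiperiodic and `m`-periodic,
which makes every relation hold. -/

open Function Finset

section SignIndicator

variable {V : Type*}

noncomputable def signIndicator (R : Finset V) (v : V) : ℤ := if v ∈ R then 1 else -1

lemma signIndicator_ne_zero (R : Finset V) (v : V) : signIndicator R v ≠ 0 := by
  unfold signIndicator; split_ifs <;> decide

variable [Fintype V]

lemma sum_signIndicator (R s : Finset V) :
    ∑ v ∈ s, signIndicator R v = #(s ∩ R) - #(s ∩ Rᶜ) := by
  have hcompl : {v ∈ s | v ∉ R} = s ∩ Rᶜ := by ext; simp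
  simp only [signIndicator, sum_ite, sum_const, smul_neg, nsmul_eq_mul, mul_one,
    filter_mem_eq_inter, hcompl, sub_eq_add_neg]

lemma SimpleGraph.isCNBColoring_iff_sum_signIndicator (G : SimpleGraph V) (R : Finset V) :
    G.IsCNBColoring R ↔
      ∀ v, signIndicator R v + ∑ w ∈ G.neighborFinset v, signIndicator R w = 0 := by
  refine forall_congr' fun v => ?_
  rw [← sum_insert (G.notMem_neighborFinset_self v), sum_signIndicator, sub_eq_zero, Nat.cast_inj]

lemma antiperiodic_signIndicator_ker [AddMonoid V] (φ : V →+ ZMod 2) {c : V} (hc : φ c = 1) :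
    Antiperiodic (signIndicator ({x | φ x = 0} : Finset V)) c := by
  intro v
  simp only [signIndicator, mem_filter, mem_univ, true_and, map_add, hc]
  generalize φ v = t
  fin_cases t <;> decide

lemma periodic_signIndicator_ker [AddMonoid V] (φ : V →+ ZMod 2) {c : V} (hc : φ c = 0) :
    Periodic (signIndicator ({x | φ x = 0} : Finset V)) c := by
  intro v
  simp only [signIndicator, mem_filter, mem_univ, true_and, map_add, hc, add_zero]

end SignIndicator

theorem Function.Antiperiodic.eq_zero_of_periodic_odd_nsmul {G M : Type*} [AddMonoid G]
    [AddGroup M] [IsAddTorsionFree M] {f : G → M} {c : G} (hf : Antiperiodic f c) {k : ℕ}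
    (hk : Odd k) (hp : Periodic f (k • c)) : f = 0 := by
  obtain ⟨j, rfl⟩ := hk
  funext x
  exact self_eq_neg.mp ((hp x).symm.trans (hf.odd_nsmul_antiperiodic j x))

/- "Balanced" means `f v + f (v + a) + f (v - a) + f (v + b) = 0` for all `v`; for `2b = 0` and `f`
a `±1` coloring, this is the CNB condition on the Cayley graph with connection set `{±a, b}`. -/
section Balanced

variable {G M : Type*} [AddCommGroup G] [AddCommGroup M] {f : G → M} {a b : G}

lemma balanced_of_antiperiodic_of_periodic (ha : Antiperiodic f a) (hb : Periodic f b) (v : G) :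
    f v + f (v + a) + f (v - a) + f (v + b) = 0 := by
  rw [ha v, ha.sub_eq v, hb v]
  abel

variable [IsAddTorsionFree M] (hb : b + b = 0)
  (hf : ∀ v, f v + f (v + a) + f (v - a) + f (v + b) = 0)
include hb hf

lemma periodic_of_balanced {k l : ℕ} (hk : Odd k) (hkl : k • a = l • b) : Periodic f b := by
  have hk0 : k • (a + a) = 0 := by rw [nsmul_add, hkl, ← nsmul_add, hb, nsmul_zero]
  set g : G → M := fun u => f u - f (u + b)
  have hg : Antiperiodic g (a + a) := fun u => by
    have h₁ := hf (u + a)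
    have h₂ := hf (u + a + b)
    rw [add_sub_cancel_right, add_assoc u a a] at h₁
    rw [show u + a + b + a = u + (a + a) + b by abel, show u + a + b - a = u + b by abel,
      add_assoc (u + a) b b, hb, add_zero] at h₂
    show f (u + (a + a)) - f (u + (a + a) + b) = -(f u - f (u + b))
    rw [eq_neg_iff_add_eq_zero, ← sub_eq_zero.mpr (h₁.trans h₂.symm)]
    abel
  have hg0 : g = 0 :=
    hg.eq_zero_of_periodic_odd_nsmul hk (hk0 ▸ fun u => congrArg g (add_zero u))
  exact fun u => (sub_eq_zero.mp (congrFun hg0 u)).symm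

lemma antiperiodic_of_balanced {k l : ℕ} (hk : Odd k) (hkl : k • a = l • b) :
    Antiperiodic f a := by
  have hfb := periodic_of_balanced hb hf hk hkl
  set s : G → M := fun v => f v + f (v + a)
  have hs : Antiperiodic s a := fun v => by
    have h := hf (v + a)
    rw [add_sub_cancel_right, hfb (v + a)] at h
    show f (v + a) + f (v + a + a) = -(f v + f (v + a))
    rw [eq_neg_iff_add_eq_zero, ← h]
    abel
  have hsb : Periodic s b := fun v => by
    simp only [s, hfb v, add_right_comm v b a, hfb (v + a)]
  have hs0 : s = 0 := hs.eq_zero_of_periodic_odd_nsmul hk (hkl ▸ hsb.nsmul l)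
  exact fun v => eq_neg_of_add_eq_zero_right (congrFun hs0 v)

lemma eq_zero_of_balanced {k l : ℕ} (hk : Odd k) (hkl : k • a = l • b) : f = 0 :=
  (antiperiodic_of_balanced hb hf hk hkl).eq_zero_of_periodic_odd_nsmul hk
    (hkl ▸ (periodic_of_balanced hb hf hk hkl).nsmul l)

end Balanced

lemma ZMod.natCast_add_self_eq_zero {n m : ℕ} (h : 2 * m = n) : (m : ZMod n) + m = 0 := by
  rw [← Nat.cast_add, ← two_mul, h, ZMod.natCast_self]

lemma ZMod.natCast_ne_zero_of_pos_of_lt {n k : ℕ} (h0 : 0 < k) (hk : k < n) :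
    (k : ZMod n) ≠ 0 := by
  rw [Ne, ZMod.natCast_eq_zero_iff]
  exact Nat.not_dvd_of_pos_of_lt h0 hk

section CirculantPair

variable {n m d : ℕ} [NeZero n] (hnm : 2 * m = n) (hd : 0 < d) (hdm : d < m)
include hnm hd hdm

lemma neighborFinset_circulant_pair (v : ZMod n) :
    (circulant n {d, m}).neighborFinset v = {v + d, v - d, v + m} := by
  have hm := ZMod.natCast_add_self_eq_zero hnm
  have hd0 := ZMod.natCast_ne_zero_of_pos_of_lt (n := n) hd (by omega)
  have hm0 := ZMod.natCast_ne_zero_of_pos_of_lt (n := n) (k := m) (by omega) (by omega)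
  ext w
  rw [SimpleGraph.mem_neighborFinset]
  simp only [circulant, SimpleGraph.fromRel_adj, mem_insert, mem_singleton, exists_eq_or_imp,
    exists_eq_left]
  grind

lemma sum_neighborFinset_circulant_pair {M : Type*} [AddCommMonoid M] (f : ZMod n → M)
    (v : ZMod n) :
    ∑ w ∈ (circulant n {d, m}).neighborFinset v, f w = f (v + d) + f (v - d) + f (v + m) := by
  have hdd := ZMod.natCast_ne_zero_of_pos_of_lt (n := n) (k := d + d) (by omega) (by omega)
  have hmd := ZMod.natCast_ne_zero_of_pos_of_lt (n := n) (k := m - d) (by omega) (by omega)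
  have hdm' := ZMod.natCast_ne_zero_of_pos_of_lt (n := n) (k := d + m) (by omega) (by omega)
  push_cast [Nat.cast_sub hdm.le] at hdd hmd hdm'
  rw [neighborFinset_circulant_pair hnm hd hdm, sum_insert (by grind), sum_pair (by grind),
    add_assoc]

lemma isCNBColoring_circulant_pair_iff (R : Finset (ZMod n)) :
    (circulant n {d, m}).IsCNBColoring R ↔ ∀ v : ZMod n,
      signIndicator R v + signIndicator R (v + d) + signIndicator R (v - d) +
        signIndicator R (v + m) = 0 := by
  simp only [SimpleGraph.isCNBColoring_iff_sum_signIndicator,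
    sum_neighborFinset_circulant_pair hnm hd hdm, ← add_assoc]

end CirculantPair

/-- For `n` even and `1 ≤ d ≤ n/2 − 1` with `d` relatively prime to `n/2`, the cubic circulant
`C_n(d, n/2)` is a CNBC graph iff `n ≡ 0 (mod 4)`. -/
theorem cubic_circulant_cnbc_iff (n d : ℕ) [NeZero n] (hn : Even n)
    (hd1 : 1 ≤ d) (hd2 : d ≤ n / 2 - 1) (hcop : Nat.Coprime d (n / 2)) :
    (∃ R : Finset (ZMod n), (circulant n {d, n / 2}).IsCNBColoring R) ↔ n % 4 = 0 := by
  set m := n / 2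
  have hnm : 2 * m = n := Nat.two_mul_div_two_of_even hn
  have hdm : d < m := by omega
  simp only [isCNBColoring_circulant_pair_iff hnm hd1 hdm]
  constructor
  · rintro ⟨R, hR⟩
    by_contra h4
    have hm : Odd m := Nat.odd_iff.mpr (by omega)
    have hmd : m • (d : ZMod n) = d • (m : ZMod n) := by simp [mul_comm]
    exact signIndicator_ne_zero R 0
      (congrFun (eq_zero_of_balanced (ZMod.natCast_add_self_eq_zero hnm) hR hm hmd) 0)
  · intro h4
    have hm : Even m := Nat.even_iff.mpr (by omega)
    have hd : Odd d := Nat.Coprime.odd_of_right (hcop.coprime_dvd_right hm.two_dvd)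
    let φ : ZMod n →+ ZMod 2 := (ZMod.castHom (hnm ▸ dvd_mul_right 2 m) (ZMod 2)).toAddMonoidHom
    exact ⟨_, balanced_of_antiperiodic_of_periodic
      (antiperiodic_signIndicator_ker φ (by simp [φ, hd.natCast_zmod_two]))
      (periodic_signIndicator_ker φ (by simp [φ, hm.natCast_zmod_two]))⟩
end

section
/- If G is a finite simple graph admitting a CNB-coloring and H is any finite simple graph, then the strong product G ⊠ H is a CNBC graph. -/
open scoped Classical

/-- The strong product `G ⊠ H`: `(g, h)` is adjacent to `(g', h')` iff (`g = g'` and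
`h h' ∈ E(H)`), or (`h = h'` and `g g' ∈ E(G)`), or (`g g' ∈ E(G)` and `h h' ∈ E(H)`). -/
def SimpleGraph.strongProd {V W : Type*} (G : SimpleGraph V) (H : SimpleGraph W) :
    SimpleGraph (V × W) where
  Adj x y :=
    (x.1 = y.1 ∧ H.Adj x.2 y.2) ∨ (x.2 = y.2 ∧ G.Adj x.1 y.1) ∨
      (G.Adj x.1 y.1 ∧ H.Adj x.2 y.2)
  symm := by
    constructor
    rintro x y (⟨h1, h2⟩ | ⟨h1, h2⟩ | ⟨h1, h2⟩)
    · exact Or.inl ⟨h1.symm, h2.symm⟩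
    · exact Or.inr (Or.inl ⟨h1.symm, h2.symm⟩)
    · exact Or.inr (Or.inr ⟨h1.symm, h2.symm⟩)
  loopless := by constructor; rintro x (⟨h1, h2⟩ | ⟨h1, h2⟩ | ⟨h1, h2⟩) <;> simp_all

/-! Closed neighborhoods of the strong product are products of closed neighborhoods, so coloring
`(g, h)` by the color of `g` makes every closed neighborhood of `G ⊠ H` a product
`(N[g] ∩ R) × N[h]` versus `(N[g] \ R) × N[h]`, and these have equal size. -/

theorem Finset.product_sdiff_product_univ {α β : Type*} [DecidableEq α] [DecidableEq β]
    [Fintype β] (s t : Finset α) (u : Finset β) : s ×ˢ u \ t ×ˢ univ = (s \ t) ×ˢ u := by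
  ext
  simp [and_right_comm]

namespace SimpleGraph

variable {V W : Type*} (G : SimpleGraph V) (H : SimpleGraph W)

-- `IsCNBColoring` is stated with the classical `DecidableEq` instance; this form accepts any.
theorem isCNBColoring_iff [Fintype V] [DecidableEq V] {R : Finset V} :
    G.IsCNBColoring R ↔
      ∀ v, (insert v (G.neighborFinset v) ∩ R).card = (insert v (G.neighborFinset v) \ R).card := by
  simp only [IsCNBColoring, Finset.sdiff_eq_inter_compl]
  congr!

theorem strongProd_adj_or_eq_iff {x y : V × W} :
    (G.strongProd H).Adj x y ∨ y = x ↔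
      (G.Adj x.1 y.1 ∨ y.1 = x.1) ∧ (H.Adj x.2 y.2 ∨ y.2 = x.2) := by
  simp only [strongProd, Prod.ext_iff, eq_comm (a := y.1), eq_comm (a := y.2)]
  tauto

theorem insert_neighborFinset_strongProd [Fintype V] [Fintype W] [DecidableEq V] [DecidableEq W]
    (x : V × W) :
    insert x ((G.strongProd H).neighborFinset x) =
      insert x.1 (G.neighborFinset x.1) ×ˢ insert x.2 (H.neighborFinset x.2) := by
  ext y
  simpa only [Finset.mem_insert, mem_neighborFinset, Finset.mem_product, or_comm]
    using G.strongProd_adj_or_eq_iff H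

variable {G} in
theorem IsCNBColoring.strongProd [Fintype V] [Fintype W] {R : Finset V}
    (hR : G.IsCNBColoring R) : (G.strongProd H).IsCNBColoring (R ×ˢ Finset.univ) := by
  rw [isCNBColoring_iff] at hR ⊢
  intro x
  rw [insert_neighborFinset_strongProd, Finset.product_inter_product, Finset.inter_univ,
    Finset.product_sdiff_product_univ, Finset.card_product, Finset.card_product, hR x.1]

end SimpleGraph

/-- If `G` is a CNBC graph, then for any graph `H` the strong product `G ⊠ H` is a CNBC
graph. -/
theorem strongProd_cnbc {V W : Type*} [Fintype V] [Fintype W]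
    (G : SimpleGraph V) (H : SimpleGraph W)
    (hG : ∃ R : Finset V, G.IsCNBColoring R) :
    ∃ R : Finset (V × W), (G.strongProd H).IsCNBColoring R := by
  obtain ⟨R, hR⟩ := hG
  exact ⟨_, hR.strongProd H⟩
end
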